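/- arXiv:0907.0615 — 3 statements merged into one kernel-verified Lean document; each statement's English description precedes it below -/
import Mathlib

section
/- Let μ : Σ → Σ* be a morphism on a finite alphabet Σ and let Ψ ⊆ Σ. Then there exists an integer T ≥ 1 such that the morphism φ = μ^T satisfies: (a) if a letter a is (φ,Ψ)-moribund, then φⁿ(a) ∈ Ψ* for all n > 0 and a ∈ Σ∖Ψ; (b) if a letter a is (φ,Ψ)-robust, then the word φⁿ(a) contains at least one letter of Σ∖Ψ for all n > 0. -/
/-! The sets `Eₙ` of letters `a` such that `μⁿ(a)` contains a letter outside `Ψ` are the orbit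
of `Σ ∖ Ψ` under the map `U ↦ {a | μ(a) meets U}` on the finite set `𝒫(Σ)`. Such an orbit
is eventually periodic, so for a suitable `T ≥ 1` (a multiple of the period exceeding the
preperiod) all the sets `E_{Tn}` with `n ≥ 1` coincide. For `φ = μ^T`, whether `φⁿ(a)` contains
a letter outside `Ψ` therefore does not depend on `n ≥ 1`: a moribund letter must already die
after one step, and a robust one never does. -/

/-- Application of a morphism (letter-to-word map) to a word. -/
def applyMorphism {σ : Type*} (μ : σ → List σ) (w : List σ) : List σ :=
  (w.map μ).flatten

/-- `morphIter μ n a` is the word `μ^n(a)`. -/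
def morphIter {σ : Type*} (μ : σ → List σ) (n : ℕ) (a : σ) : List σ :=
  (applyMorphism μ)^[n] [a]

/-- The `T`-th power of the morphism `μ` (as a letter-to-word map). -/
def morphPow {σ : Type*} (μ : σ → List σ) (T : ℕ) : σ → List σ :=
  fun c => morphIter μ T c

/-- `a` is `(μ,Ψ)`-dead: `μ^n(a) ∈ Ψ*` for every `n ≥ 0`. -/
def IsDead {σ : Type*} (μ : σ → List σ) (Ψ : Set σ) (a : σ) : Prop :=
  ∀ n, ∀ c ∈ morphIter μ n a, c ∈ Ψ

/-- `a` is `(μ,Ψ)`-moribund: some `μ^m(a)` contains a letter of `Σ∖Ψ`, and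
`μ^n(a) ∈ Ψ*` for every `n > m`. -/
def IsMoribund {σ : Type*} (μ : σ → List σ) (Ψ : Set σ) (a : σ) : Prop :=
  ∃ m, (∃ c ∈ morphIter μ m a, c ∉ Ψ) ∧ ∀ n, m < n → ∀ c ∈ morphIter μ n a, c ∈ Ψ

/-- `a` is `(μ,Ψ)`-robust: `μ^n(a)` contains a letter of `Σ∖Ψ` for infinitely many `n`. -/
def IsRobust {σ : Type*} (μ : σ → List σ) (Ψ : Set σ) (a : σ) : Prop :=
  ∀ N, ∃ n, N ≤ n ∧ ∃ c ∈ morphIter μ n a, c ∉ Ψ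

open Function

theorem Function.exists_iterate_mul_eq_iterate {α : Type*} [Finite α] (f : α → α) (x : α) :
    ∃ T, 0 < T ∧ ∀ k, 0 < k → f^[T * k] x = f^[T] x := by
  obtain ⟨s, p, hp, hperiodic⟩ : ∃ s p, 0 < p ∧ IsPeriodicPt f p (f^[s] x) := by
    obtain ⟨m, n, hmn, heq⟩ := Finite.exists_ne_map_eq_of_infinite (fun n : ℕ => f^[n] x)
    rcases hmn.lt_or_gt with h | h
    · refine ⟨m, n - m, by omega, ?_⟩
      rw [IsPeriodicPt, IsFixedPt, ← iterate_add_apply, Nat.sub_add_cancel h.le]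
      exact heq.symm
    · refine ⟨n, m - n, by omega, ?_⟩
      rw [IsPeriodicPt, IsFixedPt, ← iterate_add_apply, Nat.sub_add_cancel h.le]
      exact heq
  set T := p * (s + 1)
  have hsT : s ≤ T := (Nat.le_succ s).trans (Nat.le_mul_of_pos_left _ hp)
  have hT : IsPeriodicPt f T (f^[T] x) := by
    have := (hperiodic.apply_iterate (T - s)).mul_const (s + 1)
    rwa [← iterate_add_apply, Nat.sub_add_cancel hsT] at this
  refine ⟨T, by positivity, fun k hk => ?_⟩
  obtain ⟨j, rfl⟩ := Nat.exists_eq_add_of_lt hk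
  rw [zero_add, mul_add_one, iterate_add_apply]
  exact hT.mul_const j

section Morphism

variable {σ : Type*} (μ : σ → List σ)

theorem applyMorphism_eq_flatMap (w : List σ) : applyMorphism μ w = w.flatMap μ :=
  List.flatMap_def.symm

theorem iterate_applyMorphism (n : ℕ) :
    (applyMorphism μ)^[n] = applyMorphism (morphPow μ n) := by
  induction n with
  | zero =>
    funext w
    exact (List.flatMap_singleton' w).symm
  | succ n ih =>
    funext w
    have hpow : morphPow μ (n + 1) = fun c => applyMorphism μ (morphPow μ n c) := by
      funext c
      simp only [morphPow, morphIter, iterate_succ_apply']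
    simp only [iterate_succ_apply', ih, hpow, applyMorphism_eq_flatMap, List.flatMap_assoc]

theorem morphIter_morphPow (T n : ℕ) (a : σ) :
    morphIter (morphPow μ T) n a = morphIter μ (T * n) a := by
  rw [morphIter, morphIter, ← iterate_applyMorphism, ← iterate_mul]

theorem mem_morphIter_succ {n : ℕ} {a c : σ} :
    c ∈ morphIter μ (n + 1) a ↔ ∃ b ∈ μ a, c ∈ morphIter μ n b := by
  rw [morphIter, iterate_succ_apply, iterate_applyMorphism, applyMorphism_eq_flatMap,
    applyMorphism_eq_flatMap, List.flatMap_singleton, List.mem_flatMap]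
  rfl

def lettersHitting (U : Set σ) : Set σ :=
  {a | ∃ b ∈ μ a, b ∈ U}

theorem exists_notMem_morphIter_iff (Ψ : Set σ) (n : ℕ) (a : σ) :
    (∃ c ∈ morphIter μ n a, c ∉ Ψ) ↔ a ∈ (lettersHitting μ)^[n] Ψᶜ := by
  induction n generalizing a with
  | zero => simp [morphIter]
  | succ n ih =>
    simp only [iterate_succ_apply', lettersHitting, Set.mem_ofPred_eq, ← ih,
      mem_morphIter_succ]
    constructor
    · rintro ⟨c, ⟨b, hb, hc⟩, hcΨ⟩
      exact ⟨b, hb, c, hc, hcΨ⟩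
    · rintro ⟨b, hb, c, hc, hcΨ⟩
      exact ⟨c, ⟨b, hb, hc⟩, hcΨ⟩

theorem exists_pow_notMem_morphIter_iff [Finite σ] (Ψ : Set σ) :
    ∃ T, 0 < T ∧ ∀ n a, 0 < n →
      ((∃ c ∈ morphIter (morphPow μ T) n a, c ∉ Ψ) ↔
        ∃ c ∈ morphIter (morphPow μ T) 1 a, c ∉ Ψ) := by
  obtain ⟨T, hT, hstable⟩ := exists_iterate_mul_eq_iterate (lettersHitting μ) Ψᶜ
  refine ⟨T, hT, fun n a hn => ?_⟩
  simp only [morphIter_morphPow, exists_notMem_morphIter_iff, mul_one, hstable n hn]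

end Morphism

/-- Lemma 7.7.3 of Allouche–Shallit. For every morphism `μ` on a
finite alphabet `Σ` and every `Ψ ⊆ Σ`, there is `T ≥ 1` such that `φ = μ^T` satisfies:
(a) if `a` is `(φ,Ψ)`-moribund then `φ^n(a) ∈ Ψ*` for all `n > 0` and `a ∈ Σ∖Ψ`;
(b) if `a` is `(φ,Ψ)`-robust then `φ^n(a)` contains a letter of `Σ∖Ψ` for all `n > 0`. -/
theorem stmt_8 {σ : Type*} [Fintype σ] (μ : σ → List σ) (Ψ : Set σ) :
    ∃ T, 1 ≤ T ∧
      (∀ a, IsMoribund (morphPow μ T) Ψ a →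
        (∀ n, 0 < n → ∀ c ∈ morphIter (morphPow μ T) n a, c ∈ Ψ) ∧ a ∉ Ψ) ∧
      (∀ a, IsRobust (morphPow μ T) Ψ a →
        ∀ n, 0 < n → ∃ c ∈ morphIter (morphPow μ T) n a, c ∉ Ψ) := by
  obtain ⟨T, hT, hstable⟩ := exists_pow_notMem_morphIter_iff μ Ψ
  refine ⟨T, hT, fun a ⟨m, halive, hdead⟩ => ?_, fun a hrobust n hn => ?_⟩
  · obtain rfl : m = 0 := by
      by_contra hm
      obtain ⟨c, hc, hcΨ⟩ :=
        (hstable (m + 1) a (by omega)).2 ((hstable m a (by omega)).1 halive)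
      exact hcΨ (hdead (m + 1) (by omega) c hc)
    obtain ⟨c, hc, hcΨ⟩ := halive
    rw [morphIter, iterate_zero_apply, List.mem_singleton] at hc
    exact ⟨hdead, hc ▸ hcΨ⟩
  · obtain ⟨k, hk, halive⟩ := hrobust 1
    exact (hstable n a hn).2 ((hstable k a hk).1 halive)
end

section
/- Let μ : Σ → B₂(Σ) be a 2-dimensional morphism prolongable on a with shape-symmetric fixed point y = μ^ω(a). Let μ₁ be the unidimensional morphism obtained by taking the first row of the μ-image of each letter occurring in the first row of y, and μ₂ the unidimensional morphism obtained by taking the first column of the μ-image of each letter occurring in the first column of y; both are prolongable on a with infinite fixed points the first row, respectively the first column, of y. Then the directive languages L_{μ₁,a} and L_{μ₂,a} are equal. -/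
/-- A bounded 2-dimensional picture over `σ`: a shape `(width, height)` together with
its entries (entries outside the domain `[0,width) × [0,height)` are irrelevant). -/
structure Picture (σ : Type*) where
  width : ℕ
  height : ℕ
  entry : ℕ → ℕ → σ

/-- `y : ℕ × ℕ → σ` is the 2-dimensional infinite fixed point `μ^ω(a)` of the
2-dimensional morphism `μ`, prolongable on `a`.  This packages: prolongability
(`(μ a)(0,0) = a`, `y(0,0) = a`); the coherence conditions making the application of
`μ` to `y` well defined (images of letters in a common column of `y` have equal widths,
images of letters in a common row have equal heights, and all images occurring in `y`
are nonempty); and the fixed-point equation `μ(y) = y`, expressed via the sequences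
`col`, `row` of boundary coordinates of the blocks `μ(y(m,n))`. -/
def IsFixedPoint2D {σ : Type*} (μ : σ → Picture σ) (a : σ) (y : ℕ × ℕ → σ) : Prop :=
  y (0, 0) = a ∧ (μ a).entry 0 0 = a ∧
  (∀ m n, 1 ≤ (μ (y (m, n))).width ∧ 1 ≤ (μ (y (m, n))).height) ∧
  (∀ m n n', (μ (y (m, n))).width = (μ (y (m, n'))).width) ∧
  (∀ m m' n, (μ (y (m, n))).height = (μ (y (m', n))).height) ∧
  ∃ col row : ℕ → ℕ,
    col 0 = 0 ∧ row 0 = 0 ∧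
    (∀ m, col (m + 1) = col m + (μ (y (m, 0))).width) ∧
    (∀ n, row (n + 1) = row n + (μ (y (0, n))).height) ∧
    (∀ m n i j, i < (μ (y (m, n))).width → j < (μ (y (m, n))).height →
      y (col m + i, row n + j) = (μ (y (m, n))).entry i j)

/-- The fixed point `y` of `μ` is shape-symmetric: if the shape of `μ(y(m,n))` is
`(s,t)` then the shape of `μ(y(n,m))` is `(t,s)`. -/
def ShapeSymmetric {σ : Type*} (μ : σ → Picture σ) (y : ℕ × ℕ → σ) : Prop :=
  ∀ m n, (μ (y (m, n))).width = (μ (y (n, m))).height ∧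
         (μ (y (m, n))).height = (μ (y (n, m))).width

/-- The unidimensional morphism obtained from the first rows of the `μ`-images. -/
def firstRow {σ : Type*} (μ : σ → Picture σ) (b : σ) : List σ :=
  List.ofFn (fun i : Fin (μ b).width => (μ b).entry i.1 0)

/-- The unidimensional morphism obtained from the first columns of the `μ`-images. -/
def firstCol {σ : Type*} (μ : σ → Picture σ) (b : σ) : List σ :=
  List.ofFn (fun j : Fin (μ b).height => (μ b).entry 0 j.1)

/-- The (partial) transition function `δ_ν` of the automaton `𝒜_{ν,a}` of a
unidimensional morphism `ν`, extended to words of digits. -/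
def deltaW {σ : Type*} (ν : σ → List σ) (b : σ) (w : List ℕ) : Option σ :=
  List.foldlM (fun s i => (ν s)[i]?) b w

/-- The directive language `L_{ν,a}`: the words accepted by `𝒜_{ν,a}` (all states are
final, so acceptance means the run is defined) which do not have `0` as a prefix. -/
def directive {σ : Type*} (ν : σ → List σ) (a : σ) : Set (List ℕ) :=
  {w | (deltaW ν a w).isSome = true ∧ w.head? ≠ some 0}

/-- Genealogical (radix, shortlex) order on words of digits. -/
def GenLtN (u v : List ℕ) : Prop :=
  u.length < v.length ∨ (u.length = v.length ∧ List.Lex (· < ·) u v)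

/-- `rep` is the genealogical enumeration of the language `L`. -/
def IsANSEnum (L : Set (List ℕ)) (rep : ℕ → List ℕ) : Prop :=
  (∀ n, rep n ∈ L) ∧ (∀ w ∈ L, ∃ n, rep n = w) ∧
  (∀ m n, m < n → GenLtN (rep m) (rep n))

/-! Shape-symmetry forces the blocks `μ(y(m,0))` along the first row and the blocks
`μ(y(0,m))` along the first column to start at the same offset and to have transposed
shapes, so the first row of `μ(y(m,0))` and the first column of `μ(y(0,m))` have the same
length and their `i`-th letters are `y(p,0)` and `y(0,p)` for a common `p`.  Hence the
relation `b = y(m,0) ∧ c = y(0,m)` is a simulation between the automata of `μ₁` and `μ₂`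
started at `a = y(0,0)`: the two runs on any word are defined together. -/

section Simulation

variable {σ τ : Type*}

theorem deltaW_cons (ν : σ → List σ) (b : σ) (i : ℕ) (w : List ℕ) :
    deltaW ν b (i :: w) = (ν b)[i]?.bind fun s => deltaW ν s w :=
  List.foldlM_cons

theorem Option.Rel.isSome_eq {R : σ → τ → Prop} {o₁ : Option σ} {o₂ : Option τ}
    (h : Option.Rel R o₁ o₂) : o₁.isSome = o₂.isSome := by
  cases h <;> rfl

theorem Option.Rel.bind {υ ω : Type*} {R : σ → τ → Prop} {S : υ → ω → Prop}
    {o₁ : Option σ} {o₂ : Option τ} (h : Option.Rel R o₁ o₂)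
    {f : σ → Option υ} {g : τ → Option ω} (hfg : ∀ s t, R s t → Option.Rel S (f s) (g t)) :
    Option.Rel S (o₁.bind f) (o₂.bind g) := by
  cases h with
  | none => exact .none
  | some hst => exact hfg _ _ hst

theorem deltaW_rel_of_simulation {ν₁ : σ → List σ} {ν₂ : τ → List τ} {R : σ → τ → Prop}
    (hR : ∀ b c, R b c → ∀ i : ℕ, Option.Rel R (ν₁ b)[i]? (ν₂ c)[i]?)
    (w : List ℕ) {b : σ} {c : τ} (hbc : R b c) :
    Option.Rel R (deltaW ν₁ b w) (deltaW ν₂ c w) := by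
  induction w generalizing b c with
  | nil => exact .some hbc
  | cons i w ih =>
    rw [deltaW_cons, deltaW_cons]
    exact (hR b c hbc i).bind fun _ _ hst => ih hst

theorem directive_eq_of_simulation {ν₁ ν₂ : σ → List σ} {R : σ → σ → Prop}
    (hR : ∀ b c, R b c → ∀ i : ℕ, Option.Rel R (ν₁ b)[i]? (ν₂ c)[i]?) {a : σ} (ha : R a a) :
    directive ν₁ a = directive ν₂ a := by
  ext w
  simp only [directive, Set.mem_ofPred_eq, (deltaW_rel_of_simulation hR w ha).isSome_eq]

end Simulation

section FixedPoint

variable {σ : Type*} {μ : σ → Picture σ} {a : σ} {y : ℕ × ℕ → σ}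

theorem IsFixedPoint2D.exists_diagonal_offsets (hfp : IsFixedPoint2D μ a y)
    (hss : ShapeSymmetric μ y) :
    ∃ pos : ℕ → ℕ, ∀ m i, i < (μ (y (m, 0))).width →
      y (pos m + i, 0) = (μ (y (m, 0))).entry i 0 ∧
      y (0, pos m + i) = (μ (y (0, m))).entry 0 i := by
  obtain ⟨-, -, hpos, -, -, col, row, hcol0, hrow0, hcolS, hrowS, hfix⟩ := hfp
  have hcol_row : ∀ m, col m = row m := by
    intro m
    induction m with
    | zero => rw [hcol0, hrow0]
    | succ m ih => rw [hcolS, hrowS, ih, (hss m 0).1]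
  refine ⟨col, fun m i hi => ⟨?_, ?_⟩⟩
  · simpa [hrow0] using hfix m 0 i 0 hi (hpos m 0).2
  · have hi' : i < (μ (y (0, m))).height := (hss m 0).1 ▸ hi
    simpa [hcol0, hcol_row] using hfix 0 m 0 i (hpos 0 m).1 hi'

theorem IsFixedPoint2D.firstRow_firstCol_simulation (hfp : IsFixedPoint2D μ a y)
    (hss : ShapeSymmetric μ y) (m i : ℕ) :
    Option.Rel (fun b c => ∃ p, b = y (p, 0) ∧ c = y (0, p))
      (firstRow μ (y (m, 0)))[i]? (firstCol μ (y (0, m)))[i]? := by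
  obtain ⟨pos, hpos⟩ := hfp.exists_diagonal_offsets hss
  have hwidth := (hss m 0).1
  simp only [firstRow, firstCol, List.getElem?_ofFn, ← hwidth]
  split_ifs with hi
  · exact .some ⟨pos m + i, (hpos m i hi).1.symm, (hpos m i hi).2.symm⟩
  · exact .none

end FixedPoint

/-- Let `μ` be a 2-dimensional morphism prolongable on `a` with
shape-symmetric fixed point `y = μ^ω(a)`. Let `μ₁` (resp. `μ₂`) be the unidimensional
morphism obtained by taking the first row (resp. first column) of the `μ`-image of each
letter. Then the directive languages `L_{μ₁,a}` and `L_{μ₂,a}` are equal. -/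
theorem stmt_11 {σ : Type*} (μ : σ → Picture σ) (a : σ) (y : ℕ × ℕ → σ)
    (hfp : IsFixedPoint2D μ a y) (hss : ShapeSymmetric μ y) :
    directive (firstRow μ) a = directive (firstCol μ) a := by
  refine directive_eq_of_simulation (R := fun b c => ∃ p, b = y (p, 0) ∧ c = y (0, p))
    ?_ ⟨0, hfp.1.symm, hfp.1.symm⟩
  rintro _ _ ⟨m, rfl, rfl⟩ i
  exact hfp.firstRow_firstCol_simulation hss m i
end

section
/- Let μ : Σ → B₂(Σ) be a 2-dimensional morphism prolongable on a with shape-symmetric fixed point y = μ^ω(a). Let L denote the common directive language L_{μ₁,a} = L_{μ₂,a} of the unidimensional morphisms μ₁, μ₂ derived from the first row and first column of y, and let S be the abstract numeration system built on L with digits ordered 0 < 1 < ⋯. Then for all m,n ≥ 0 whose S-representations are nonempty, writing rep_S(m) = u·b and rep_S(n) = v·c with b,c single digits, one has (μ(y(val_S(u), val_S(v))))(b,c) = y(m,n), where (μ(σ))(b,c) denotes the entry of the picture μ(σ) at position (b,c). -/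
/-!
Along its first row, `y` is a fixed point of the one-dimensional morphism `μ₁`, and ℕ splits
into consecutive blocks, the `k`-th one carrying `μ₁(y(k,0))`. Reading a word `w · b` as
"offset `b` in the block of the address of `w`" defines an address map `blockAddr` on the
directive language, along which the automaton computes the letter of `y` at that address.
This map is strictly increasing for the genealogical order and onto ℕ, so it inverts `rep`:
`rep m = u · b` says that `m` sits at offset `b` in the block of `val u`. The same holds along
the first column with `μ₂`, and the fixed-point equation `μ(y) = y` places the entry `(b,c)`
of `μ(y(val u, val v))` at `(m, n)`.
-/

namespace List

theorem lex_append_singleton {α : Type*} {r : α → α → Prop} {u v : List α} {b c : α}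
    (hlen : u.length = v.length) (h : Lex r (u ++ [b]) (v ++ [c])) :
    Lex r u v ∨ (u = v ∧ r b c) := by
  induction u generalizing v with
  | nil =>
    obtain rfl : v = [] := List.eq_nil_of_length_eq_zero hlen.symm
    exact .inr ⟨rfl, (lex_singleton_iff b c).1 h⟩
  | cons d u ih =>
    obtain ⟨e, v, rfl⟩ := List.exists_cons_of_length_eq_add_one hlen.symm
    rw [cons_append, cons_append, cons_lex_cons_iff] at h
    rcases h with hde | ⟨rfl, h⟩
    · exact .inl (.rel hde)
    · rcases ih (by simpa using hlen) h with h | ⟨rfl, hbc⟩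
      · exact .inl (.cons h)
      · exact .inr ⟨rfl, hbc⟩

end List

theorem GenLtN.irrefl (u : List ℕ) : ¬ GenLtN u u := by
  rintro (h | ⟨-, h⟩)
  · exact lt_irrefl _ h
  · exact List.lex_irrefl (fun _ => lt_irrefl _) u h

theorem GenLtN.of_append_singleton {u v : List ℕ} {b c : ℕ}
    (h : GenLtN (u ++ [b]) (v ++ [c])) : GenLtN u v ∨ (u = v ∧ b < c) := by
  rcases h with h | ⟨hlen, h⟩
  · exact .inl (.inl (by simpa using h))
  · have hlen : u.length = v.length := by simpa using hlen
    exact (List.lex_append_singleton hlen h).imp_left fun h => .inr ⟨hlen, h⟩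

theorem IsANSEnum.injective {L : Set (List ℕ)} {rep : ℕ → List ℕ} (h : IsANSEnum L rep) :
    Function.Injective rep := by
  intro m n hmn
  by_contra hne
  rcases Nat.lt_or_gt_of_ne hne with hlt | hlt
  · exact GenLtN.irrefl _ (hmn ▸ h.2.2 m n hlt)
  · exact GenLtN.irrefl _ (hmn ▸ h.2.2 n m hlt)

section deltaW

variable {σ : Type*} (ν : σ → List σ)

theorem deltaW_append_singleton (b : σ) (u : List ℕ) (d : ℕ) :
    deltaW ν b (u ++ [d]) = (deltaW ν b u).bind fun s => (ν s)[d]? := by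
  simp [deltaW, List.foldlM_append]

theorem isSome_deltaW_of_append_singleton {b : σ} {u : List ℕ} {d : ℕ}
    (h : (deltaW ν b (u ++ [d])).isSome) : (deltaW ν b u).isSome := by
  rw [deltaW_append_singleton] at h
  cases hu : deltaW ν b u <;> simp_all

theorem cons_mem_directive {a : σ} {d : ℕ} {w : List ℕ} (h : d :: w ∈ directive ν a) :
    0 < d ∧ d < (ν a).length := by
  obtain ⟨hrun, hhead⟩ := h
  refine ⟨Nat.pos_of_ne_zero (by simpa using hhead), ?_⟩
  by_contra hd
  simp [deltaW, List.getElem?_eq_none (not_lt.1 hd)] at hrun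

theorem two_le_length_of_isANSEnum {a : σ} {rep : ℕ → List ℕ}
    (hrep : IsANSEnum (directive ν a) rep) : 2 ≤ (ν a).length := by
  obtain ⟨w, hw, hne⟩ : ∃ w ∈ directive ν a, w ≠ [] := by
    by_cases h0 : rep 0 = []
    · exact ⟨rep 1, hrep.1 1, fun h1 => zero_ne_one (hrep.injective (h0.trans h1.symm))⟩
    · exact ⟨rep 0, hrep.1 0, h0⟩
  obtain ⟨d, w, rfl⟩ := List.exists_cons_of_ne_nil hne
  have := cons_mem_directive ν hw
  omega

end deltaW

/-- `x = ν(x)` with `ν (x k)` occupying the positions `[pos k, pos (k + 1))` of `x`. -/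
structure IsBlockFixedPoint {σ : Type*} (ν : σ → List σ) (a : σ) (x : ℕ → σ) (pos : ℕ → ℕ) :
    Prop where
  apply_zero : x 0 = a
  length_pos : ∀ k, 0 < (ν (x k)).length
  pos_zero : pos 0 = 0
  pos_succ : ∀ k, pos (k + 1) = pos k + (ν (x k)).length
  getElem?_eq : ∀ k i, i < (ν (x k)).length → (ν (x k))[i]? = some (x (pos k + i))

def blockAddr (pos : ℕ → ℕ) (w : List ℕ) : ℕ := w.foldl (fun m b => pos m + b) 0

@[simp] theorem blockAddr_nil (pos : ℕ → ℕ) : blockAddr pos [] = 0 := rfl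

@[simp] theorem blockAddr_append_singleton (pos : ℕ → ℕ) (w : List ℕ) (b : ℕ) :
    blockAddr pos (w ++ [b]) = pos (blockAddr pos w) + b := by
  simp [blockAddr]

namespace IsBlockFixedPoint

variable {σ : Type*} {ν : σ → List σ} {a : σ} {x : ℕ → σ} {pos : ℕ → ℕ}

theorem monotone_pos (hx : IsBlockFixedPoint ν a x pos) : Monotone pos :=
  monotone_nat_of_le_succ fun k => by rw [hx.pos_succ]; omega

theorem le_pos (hx : IsBlockFixedPoint ν a x pos) (k : ℕ) : k ≤ pos k := by
  induction k with
  | zero => omega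
  | succ k ih => have := hx.pos_succ k; have := hx.length_pos k; omega

theorem lt_pos (hx : IsBlockFixedPoint ν a x pos) (ha : 2 ≤ (ν a).length) {k : ℕ} (hk : 0 < k) :
    k < pos k := by
  induction k, hk using Nat.le_induction with
  | base => rw [hx.pos_succ, hx.pos_zero, hx.apply_zero]; omega
  | succ k _ ih => have := hx.pos_succ k; have := hx.length_pos k; omega

theorem exists_pos_add_eq (hx : IsBlockFixedPoint ν a x pos) (m : ℕ) :
    ∃ k b, b < (ν (x k)).length ∧ pos k + b = m := by
  induction m with
  | zero => exact ⟨0, 0, hx.length_pos 0, by rw [hx.pos_zero]⟩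
  | succ m ih =>
    obtain ⟨k, b, hb, rfl⟩ := ih
    by_cases hb' : b + 1 < (ν (x k)).length
    · exact ⟨k, b + 1, hb', by omega⟩
    · exact ⟨k + 1, 0, hx.length_pos _, by rw [hx.pos_succ]; omega⟩

theorem deltaW_eq_some (hx : IsBlockFixedPoint ν a x pos) {w : List ℕ}
    (hw : (deltaW ν a w).isSome) : deltaW ν a w = some (x (blockAddr pos w)) := by
  induction w using List.reverseRecOn with
  | nil => rw [blockAddr_nil, hx.apply_zero]; rfl
  | append_singleton u b ih =>
    have hu := isSome_deltaW_of_append_singleton ν hw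
    rw [deltaW_append_singleton, ih hu, Option.bind_some] at hw ⊢
    have hb : b < (ν (x (blockAddr pos u))).length := by simpa using hw
    rw [hx.getElem?_eq _ _ hb, blockAddr_append_singleton]

theorem append_singleton_mem_directive_iff (hx : IsBlockFixedPoint ν a x pos) {u : List ℕ}
    {b : ℕ} : u ++ [b] ∈ directive ν a ↔
      u ∈ directive ν a ∧ b < (ν (x (blockAddr pos u))).length ∧ (u = [] → b ≠ 0) := by
  constructor
  · rintro ⟨hrun, hhead⟩
    have hu := isSome_deltaW_of_append_singleton ν hrun
    rw [deltaW_append_singleton, hx.deltaW_eq_some hu, Option.bind_some] at hrun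
    refine ⟨⟨hu, ?_⟩, by simpa using hrun, ?_⟩
    · rcases u with _ | ⟨d, t⟩ <;> simp_all
    · rintro rfl
      simpa using hhead
  · rintro ⟨⟨hu, hhead⟩, hb, hb0⟩
    refine ⟨by simpa [deltaW_append_singleton, hx.deltaW_eq_some hu] using hb, ?_⟩
    rcases u with _ | ⟨d, t⟩
    · simpa using hb0 rfl
    · simpa using hhead

theorem blockAddr_pos (hx : IsBlockFixedPoint ν a x pos) {w : List ℕ}
    (hw : w ∈ directive ν a) (hne : w ≠ []) : 0 < blockAddr pos w := by
  induction w using List.reverseRecOn with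
  | nil => exact absurd rfl hne
  | append_singleton u b ih =>
    obtain ⟨hu, -, hb⟩ := hx.append_singleton_mem_directive_iff.1 hw
    rw [blockAddr_append_singleton]
    rcases eq_or_ne u [] with rfl | hne
    · have := hb rfl; simp only [blockAddr_nil]; omega
    · have := ih hu hne; have := hx.le_pos (blockAddr pos u); omega

theorem blockAddr_lt_blockAddr (hx : IsBlockFixedPoint ν a x pos) {u v : List ℕ}
    (hu : u ∈ directive ν a) (hv : v ∈ directive ν a) (huv : GenLtN u v) :
    blockAddr pos u < blockAddr pos v := by
  induction u using List.reverseRecOn generalizing v with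
  | nil =>
    refine hx.blockAddr_pos hv ?_
    rintro rfl
    exact GenLtN.irrefl _ huv
  | append_singleton u b ih =>
    obtain ⟨v, c, rfl⟩ : ∃ v' c, v = v' ++ [c] := by
      rcases List.eq_nil_or_concat v with rfl | ⟨v', c, rfl⟩
      · rcases huv with h | ⟨h, -⟩ <;> simp at h
      · exact ⟨v', c, List.concat_eq_append ..⟩
    obtain ⟨hu, hb, -⟩ := hx.append_singleton_mem_directive_iff.1 hu
    obtain ⟨hv, -, -⟩ := hx.append_singleton_mem_directive_iff.1 hv
    simp only [blockAddr_append_singleton]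
    rcases huv.of_append_singleton with huv | ⟨rfl, hbc⟩
    · calc pos (blockAddr pos u) + b < pos (blockAddr pos u + 1) := by rw [hx.pos_succ]; omega
        _ ≤ pos (blockAddr pos v) := hx.monotone_pos (ih hu hv huv)
        _ ≤ _ := Nat.le_add_right _ _
    · omega

theorem exists_mem_directive_blockAddr_eq (hx : IsBlockFixedPoint ν a x pos)
    (ha : 2 ≤ (ν a).length) (m : ℕ) : ∃ w ∈ directive ν a, blockAddr pos w = m := by
  induction m using Nat.strong_induction_on with
  | _ m ih =>
  rcases Nat.eq_zero_or_pos m with rfl | hm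
  · exact ⟨[], ⟨rfl, by simp⟩, rfl⟩
  obtain ⟨k, b, hb, rfl⟩ := hx.exists_pos_add_eq m
  have hk : k < pos k + b := by
    rcases Nat.eq_zero_or_pos k with rfl | hk
    · exact hm
    · have := hx.lt_pos ha hk; omega
  obtain ⟨u, hu, rfl⟩ := ih k hk
  refine ⟨u ++ [b], hx.append_singleton_mem_directive_iff.2 ⟨hu, hb, ?_⟩, by simp⟩
  rintro rfl rfl
  simp [hx.pos_zero] at hm

theorem blockAddr_rep (hx : IsBlockFixedPoint ν a x pos) {rep : ℕ → List ℕ}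
    (hrep : IsANSEnum (directive ν a) rep) (m : ℕ) : blockAddr pos (rep m) = m := by
  have hmono : StrictMono (blockAddr pos ∘ rep) := fun i j hij =>
    hx.blockAddr_lt_blockAddr (hrep.1 i) (hrep.1 j) (hrep.2.2 i j hij)
  have hsurj : Function.Surjective (blockAddr pos ∘ rep) := fun m => by
    obtain ⟨w, hw, rfl⟩ := hx.exists_mem_directive_blockAddr_eq
      (two_le_length_of_isANSEnum ν hrep) m
    obtain ⟨k, rfl⟩ := hrep.2.1 w hw
    exact ⟨k, rfl⟩
  -- ℕ admits a unique order automorphism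
  have := congrArg DFunLike.coe
    (Subsingleton.elim (hmono.orderIsoOfSurjective _ hsurj) (OrderIso.refl ℕ))
  exact congrFun this m

theorem rep_eq_append_singleton (hx : IsBlockFixedPoint ν a x pos) {rep : ℕ → List ℕ}
    (hrep : IsANSEnum (directive ν a) rep) {val : List ℕ → ℕ} (hval : ∀ n, val (rep n) = n)
    {m : ℕ} {u : List ℕ} {b : ℕ} (hm : rep m = u ++ [b]) :
    b < (ν (x (val u))).length ∧ m = pos (val u) + b := by
  obtain ⟨hu, hb, -⟩ := hx.append_singleton_mem_directive_iff.1 (hm ▸ hrep.1 m)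
  obtain ⟨j, rfl⟩ := hrep.2.1 u hu
  rw [hval, ← hx.blockAddr_rep hrep j]
  exact ⟨hb, by rw [← blockAddr_append_singleton, ← hm, hx.blockAddr_rep hrep]⟩

end IsBlockFixedPoint

section Picture

variable {σ : Type*} (μ : σ → Picture σ)

@[simp] theorem length_firstRow (b : σ) : (firstRow μ b).length = (μ b).width := by
  simp [firstRow]

@[simp] theorem length_firstCol (b : σ) : (firstCol μ b).length = (μ b).height := by
  simp [firstCol]

theorem IsFixedPoint2D.exists_blocks {a : σ} {y : ℕ × ℕ → σ} (hfp : IsFixedPoint2D μ a y) :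
    ∃ col row, IsBlockFixedPoint (firstRow μ) a (fun m => y (m, 0)) col ∧
      IsBlockFixedPoint (firstCol μ) a (fun n => y (0, n)) row ∧
      ∀ m n i j, i < (μ (y (m, 0))).width → j < (μ (y (0, n))).height →
        y (col m + i, row n + j) = (μ (y (m, n))).entry i j := by
  obtain ⟨hy0, -, hsize, hwidth, hheight, col, row, hcol0, hrow0, hcolS, hrowS, hfix⟩ := hfp
  have hfix' : ∀ m n i j, i < (μ (y (m, 0))).width → j < (μ (y (0, n))).height →
      y (col m + i, row n + j) = (μ (y (m, n))).entry i j := fun m n i j hi hj =>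
    hfix m n i j (hwidth m 0 n ▸ hi) (hheight 0 m n ▸ hj)
  refine ⟨col, row, ⟨hy0, fun k => ?_, hcol0, fun k => ?_, fun k i hi => ?_⟩,
    ⟨hy0, fun k => ?_, hrow0, fun k => ?_, fun k j hj => ?_⟩, hfix'⟩
  all_goals simp only [length_firstRow, length_firstCol] at *
  · exact (hsize k 0).1
  · exact hcolS k
  · simpa [firstRow, hi, hrow0] using (hfix' k 0 i 0 hi (hsize 0 0).2).symm
  · exact (hsize 0 k).2
  · exact hrowS k
  · simpa [firstCol, hj, hcol0] using (hfix' 0 k 0 j (hsize 0 0).1 hj).symm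

end Picture

theorem stmt_12_general {σ : Type*} (μ : σ → Picture σ) (a : σ) (y : ℕ × ℕ → σ)
    (hfp : IsFixedPoint2D μ a y)
    (hcomm : directive (firstRow μ) a = directive (firstCol μ) a)
    (rep : ℕ → List ℕ) (hrep : IsANSEnum (directive (firstRow μ) a) rep)
    (val : List ℕ → ℕ) (hval : ∀ n, val (rep n) = n) :
    ∀ m n u v (b c : ℕ), rep m = u ++ [b] → rep n = v ++ [c] →
      (μ (y (val u, val v))).entry b c = y (m, n) := by
  intro m n u v b c hu hv
  obtain ⟨col, row, hrow, hcol, hfix⟩ := hfp.exists_blocks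
  obtain ⟨hb, rfl⟩ := hrow.rep_eq_append_singleton hrep hval hu
  obtain ⟨hc, rfl⟩ := hcol.rep_eq_append_singleton (hcomm ▸ hrep) hval hv
  exact (hfix _ _ _ _ (by simpa using hb) (by simpa using hc)).symm

/-- equation `(eq:y)`. Let `y = μ^ω(a)` be shape-symmetric, let `L`
be the common directive language `L_{μ₁,a} = L_{μ₂,a}` of the morphisms derived from
the first row and the first column of `y`, and let `S` be the abstract numeration
system built on `L` (with `rep` and its inverse `val`). If `rep_S(m) = u·b` and
`rep_S(n) = v·c` with `b, c` digits, then `(μ(y(val_S(u), val_S(v))))(b,c) = y(m,n)`. -/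
theorem stmt_12 {σ : Type*} (μ : σ → Picture σ) (a : σ) (y : ℕ × ℕ → σ)
    (hfp : IsFixedPoint2D μ a y) (hss : ShapeSymmetric μ y)
    (hcomm : directive (firstRow μ) a = directive (firstCol μ) a)
    (rep : ℕ → List ℕ) (hrep : IsANSEnum (directive (firstRow μ) a) rep)
    (val : List ℕ → ℕ) (hval : ∀ n, val (rep n) = n) :
    ∀ m n u v (b c : ℕ), rep m = u ++ [b] → rep n = v ++ [c] →
      (μ (y (val u, val v))).entry b c = y (m, n) :=
  stmt_12_general μ a y hfp hcomm rep hrep val hval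
end
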